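/- Let (E, L, E) be a labeled space. If (E, L, E) is disagreeable (for every nonempty A ∈ E and every labeled path β, there is n ≥ 1 with L(AE^{|β|n}) ≠ {βⁿ}), then every loop in (E, L, E) has an exit. -/

import Mathlib

universe u v

variable {V : Type u} {Λ : Type v}

/-- The relative range `r(S, α)` of a set of vertices along a labeled path. -/
def relRange (Edge : V → Λ → V → Prop) : Set V → List Λ → Set V
  | S, [] => S
  | S, a :: α => relRange Edge {w | ∃ u ∈ S, Edge u a w} α

/-- The range `r(α)` of a labeled path. -/
def lrange (Edge : V → Λ → V → Prop) (α : List Λ) : Set V :=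
  relRange Edge Set.univ α

/-- `α` is a (nonempty) labeled path of the labeled graph. -/
def IsLP (Edge : V → Λ → V → Prop) (α : List Λ) : Prop :=
  α ≠ [] ∧ (lrange Edge α).Nonempty

/-- `L(SE¹)`: labels of edges emitted from `S`. -/
def edgeLabels (Edge : V → Λ → V → Prop) (S : Set V) : Set Λ :=
  {a | ∃ u ∈ S, ∃ w, Edge u a w}

/-- `S` is regular: every nonempty `B ∈ ℬ` with `B ⊆ S` emits a finite nonzero set of labels. -/
def RegularSet (Edge : V → Λ → V → Prop) (ℬ : Set (Set V)) (S : Set V) : Prop :=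
  ∀ B ∈ ℬ, B ⊆ S → B.Nonempty →
    (edgeLabels Edge B).Finite ∧ (edgeLabels Edge B).Nonempty

/-- `H ⊆ ℬ` is hereditary. -/
def Hered (Edge : V → Λ → V → Prop) (ℬ H : Set (Set V)) : Prop :=
  H ⊆ ℬ ∧ (∀ A ∈ H, ∀ α : List Λ, IsLP Edge α → relRange Edge A α ∈ H) ∧
    (∀ A ∈ H, ∀ B ∈ H, A ∪ B ∈ H) ∧ (∀ A ∈ H, ∀ B ∈ ℬ, B ⊆ A → B ∈ H)

/-- `H` is saturated. -/
def Satur (Edge : V → Λ → V → Prop) (ℬ H : Set (Set V)) : Prop :=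
  ∀ A ∈ ℬ, RegularSet Edge ℬ A →
    (∀ α : List Λ, IsLP Edge α → relRange Edge A α ∈ H) → A ∈ H

/-- `H(A)`: sets covered by finitely many relative ranges `r(A, αᵢ)`, `αᵢ ∈ L^#(E)`. -/
def HSet (Edge : V → Λ → V → Prop) (ℬ : Set (Set V)) (A : Set V) : Set (Set V) :=
  {B ∈ ℬ | ∃ l : List (List Λ), (∀ α ∈ l, α = [] ∨ IsLP Edge α) ∧
    B ⊆ ⋃ α ∈ l, relRange Edge A α}

/-- `S(H(A))`: the saturation of `H(A)`. -/
def SHSet (Edge : V → Λ → V → Prop) (ℬ : Set (Set V)) (A : Set V) : Set (Set V) :=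
  {B ∈ ℬ | ∃ n : ℕ,
    (∀ β : List Λ, (β = [] ∨ IsLP Edge β) → β.length = n →
      relRange Edge B β ∈ HSet Edge ℬ A) ∧
    (∀ γ : List Λ, (γ = [] ∨ IsLP Edge γ) → γ.length < n →
      ∃ C ∈ HSet Edge ℬ A, ∃ D ∈ ℬ, RegularSet Edge ℬ D ∧ relRange Edge B γ = C ∪ D)}

/-- `ℬ` is an accommodating set for the labeled graph. -/
def Accommodating (Edge : V → Λ → V → Prop) (ℬ : Set (Set V)) : Prop :=
  (∀ α : List Λ, IsLP Edge α → lrange Edge α ∈ ℬ) ∧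
    (∀ A ∈ ℬ, ∀ α : List Λ, IsLP Edge α → relRange Edge A α ∈ ℬ) ∧
    (∀ A ∈ ℬ, ∀ B ∈ ℬ, A ∪ B ∈ ℬ) ∧ (∀ A ∈ ℬ, ∀ B ∈ ℬ, A ∩ B ∈ ℬ)

/-- `ℬ` is non-degenerate: closed under relative complements (and contains `∅`). -/
def NonDegenerate (ℬ : Set (Set V)) : Prop :=
  (∅ : Set V) ∈ ℬ ∧ ∀ A ∈ ℬ, ∀ B ∈ ℬ, A \ B ∈ ℬ

/-- The labeled space is weakly left-resolving. -/
def WLR (Edge : V → Λ → V → Prop) (ℬ : Set (Set V)) : Prop :=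
  ∀ A ∈ ℬ, ∀ B ∈ ℬ, ∀ α : List Λ, IsLP Edge α →
    relRange Edge (A ∩ B) α = relRange Edge A α ∩ relRange Edge B α

/-- `ℬ` is the smallest non-degenerate accommodating set. -/
def SmallestAccom (Edge : V → Λ → V → Prop) (ℬ : Set (Set V)) : Prop :=
  Accommodating Edge ℬ ∧ NonDegenerate ℬ ∧
    ∀ ℬ' : Set (Set V), Accommodating Edge ℬ' → NonDegenerate ℬ' → ℬ ⊆ ℬ'

/-- `x_{[1,n]}`: the length-`n` prefix of an infinite word. -/
def wordPrefix (x : ℕ → Λ) (n : ℕ) : List Λ := List.ofFn fun i : Fin n => x i.val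

/-- `x` lies in the closure of `L(E^∞)`: all finite prefixes are labeled paths. -/
def InfWord (Edge : V → Λ → V → Prop) (x : ℕ → Λ) : Prop :=
  ∀ n : ℕ, 1 ≤ n → IsLP Edge (wordPrefix x n)

/-- Strong cofinality of a labeled space. -/
def StrCofinal (Edge : V → Λ → V → Prop) (ℬ : Set (Set V)) : Prop :=
  ∀ A ∈ ℬ, A.Nonempty → ∀ x : ℕ → Λ, InfWord Edge x →
    ∃ N : ℕ, 1 ≤ N ∧ ∃ l : List (List Λ), (∀ α ∈ l, IsLP Edge α) ∧
      lrange Edge (wordPrefix x N) ⊆ ⋃ α ∈ l, relRange Edge A α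

/-- Minimality: the only hereditary saturated subsets of `ℬ` are `{∅}` and `ℬ`. -/
def MinimalLS (Edge : V → Λ → V → Prop) (ℬ : Set (Set V)) : Prop :=
  ∀ H : Set (Set V), Hered Edge ℬ H → Satur Edge ℬ H → H ⊆ {∅} ∨ H = ℬ

/-- `L(SEⁿ)`: labels of paths of length `n` with source in `S`. -/
def labelsOfLen (Edge : V → Λ → V → Prop) (S : Set V) (n : ℕ) : Set (List Λ) :=
  {β | β.length = n ∧ (relRange Edge S β).Nonempty}

/-- The labeled space is disagreeable. -/
def Disagreeable (Edge : V → Λ → V → Prop) (ℬ : Set (Set V)) : Prop :=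
  ∀ A ∈ ℬ, A.Nonempty → ∀ β : List Λ, IsLP Edge β →
    ∃ n : ℕ, 1 ≤ n ∧ labelsOfLen Edge A (β.length * n) ≠ {(List.replicate n β).flatten}

/-- `(α, A)` is a cycle. -/
def IsCycle (Edge : V → Λ → V → Prop) (ℬ : Set (Set V)) (α : List Λ) (A : Set V) : Prop :=
  IsLP Edge α ∧ A ∈ ℬ ∧ A.Nonempty ∧ ∀ B ∈ ℬ, B ⊆ A → relRange Edge B α = B

/-- The cycle `(α, A)` has an exit. -/
def CycleHasExit (Edge : V → Λ → V → Prop) (ℬ : Set (Set V)) (α : List Λ) (A : Set V) : Prop :=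
  ∃ t : ℕ, 1 ≤ t ∧ t ≤ α.length ∧ ∃ B ∈ ℬ, B.Nonempty ∧
    B ⊆ relRange Edge A (α.take t) ∧
    edgeLabels Edge B ≠ {a : Λ | α[t % α.length]? = some a}

/-- The cycle `(α, A)` has no exits. -/
def CycleNoExit (Edge : V → Λ → V → Prop) (ℬ : Set (Set V)) (α : List Λ) (A : Set V) : Prop :=
  ∀ t : ℕ, 1 ≤ t → t ≤ α.length → ∀ B ∈ ℬ, B.Nonempty →
    B ⊆ relRange Edge A (α.take t) →
    RegularSet Edge ℬ B ∧ edgeLabels Edge B = {a : Λ | α[t % α.length]? = some a}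

/-- Condition (L): every cycle has an exit. -/
def CondL (Edge : V → Λ → V → Prop) (ℬ : Set (Set V)) : Prop :=
  ∀ (α : List Λ) (A : Set V), IsCycle Edge ℬ α A → CycleHasExit Edge ℬ α A

/-- `α` is a loop at `A`. -/
def IsLoop (Edge : V → Λ → V → Prop) (α : List Λ) (A : Set V) : Prop :=
  IsLP Edge α ∧ A ⊆ relRange Edge A α

/-- The loop `(α, A)` has an exit. -/
def LoopHasExit (Edge : V → Λ → V → Prop) (α : List Λ) (A : Set V) : Prop :=
  {β : List Λ | ∃ k : ℕ, 1 ≤ k ∧ k ≤ α.length ∧ β = α.take k} ⊂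
      {β : List Λ | 1 ≤ β.length ∧ β.length ≤ α.length ∧ (relRange Edge A β).Nonempty} ∨
    A ⊂ relRange Edge A α

/-- `β` is an irreducible path: not a repetition of a proper initial path. -/
def IrreduciblePath (β : List Λ) : Prop :=
  ∀ k : ℕ, 1 ≤ k → k < β.length → ∀ m : ℕ, β ≠ (List.replicate m (β.take k)).flatten

/-- The generalized vertex `[v]_l`. -/
def gvClass (Edge : V → Λ → V → Prop) (l : ℕ) (v : V) : Set V :=
  {w | ∀ β : List Λ, 1 ≤ β.length → β.length ≤ l → (v ∈ lrange Edge β ↔ w ∈ lrange Edge β)}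

/-- `s(x)`: sources of infinite paths labeled by `x`. -/
def srcInf (Edge : V → Λ → V → Prop) (x : ℕ → Λ) : Set V :=
  {w | ∃ p : ℕ → V, p 0 = w ∧ ∀ n : ℕ, Edge (p n) (x n) (p (n + 1))}


/-! If a loop `(α, A)` has no exit, then `r(A, α) = A` and the only label of length `|α|`
leaving `A` is `α` itself.  Reading a path of length `|α| n` from `A` block by block, each
block must then be `α` and returns to `A`, so `L(AE^{|α|n}) = {αⁿ}` for every `n`, which
disagreeableness forbids. -/

section LabeledPaths

variable {Edge : V → Λ → V → Prop}

theorem relRange_append (S : Set V) (γ δ : List Λ) :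
    relRange Edge S (γ ++ δ) = relRange Edge (relRange Edge S γ) δ := by
  induction γ generalizing S with
  | nil => rfl
  | cons a γ ih => exact ih _

theorem relRange_empty (γ : List Λ) : relRange Edge (∅ : Set V) γ = ∅ := by
  induction γ with
  | nil => rfl
  | cons a γ ih => simpa only [relRange, Set.mem_empty_iff_false, false_and, exists_false,
      Set.ofPred_false] using ih

theorem Set.Nonempty.of_relRange {S : Set V} {γ : List Λ}
    (h : (relRange Edge S γ).Nonempty) : S.Nonempty := by
  rw [Set.nonempty_iff_ne_empty]
  rintro rfl
  simp [relRange_empty] at h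

theorem Set.Nonempty.relRange_take {S : Set V} {γ : List Λ}
    (h : (relRange Edge S γ).Nonempty) (k : ℕ) : (relRange Edge S (γ.take k)).Nonempty := by
  rw [← List.take_append_drop k γ, relRange_append] at h
  exact h.of_relRange

theorem relRange_flatten_replicate {S : Set V} {α : List Λ} (hα : relRange Edge S α = S)
    (n : ℕ) : relRange Edge S (List.replicate n α).flatten = S := by
  induction n with
  | zero => rfl
  | succ n ih => rw [List.replicate_succ, List.flatten_cons, relRange_append, hα, ih]

theorem take_mem_labelsOfLen {S : Set V} {β : List Λ} {m k : ℕ}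
    (hβ : β ∈ labelsOfLen Edge S (m + k)) : β.take m ∈ labelsOfLen Edge S m :=
  ⟨by simp [hβ.1], hβ.2.relRange_take m⟩

theorem drop_mem_labelsOfLen {S : Set V} {β : List Λ} {m k : ℕ}
    (hβ : β ∈ labelsOfLen Edge S (m + k)) :
    β.drop m ∈ labelsOfLen Edge (relRange Edge S (β.take m)) k := by
  refine ⟨by simp [hβ.1], ?_⟩
  rw [← relRange_append, List.take_append_drop]
  exact hβ.2

theorem labelsOfLen_mul_eq_singleton {S : Set V} {α : List Λ} (hα : relRange Edge S α = S)
    (hS : S.Nonempty) (huniq : labelsOfLen Edge S α.length ⊆ {α}) (n : ℕ) :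
    labelsOfLen Edge S (α.length * n) = {(List.replicate n α).flatten} := by
  induction n with
  | zero =>
    ext β
    simp only [labelsOfLen, Nat.mul_zero, List.length_eq_zero_iff, List.replicate_zero,
      List.flatten_nil, Set.mem_ofPred_eq, Set.mem_singleton_iff]
    exact ⟨And.left, fun hβ => ⟨hβ, hβ ▸ hS⟩⟩
  | succ n ih =>
    ext β
    constructor
    · intro hβ
      rw [Nat.mul_succ, Nat.add_comm] at hβ
      have hhead : β.take α.length = α := huniq (take_mem_labelsOfLen hβ)
      have htail := drop_mem_labelsOfLen hβ
      rw [hhead, hα, ih, Set.mem_singleton_iff] at htail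
      rw [Set.mem_singleton_iff, ← List.take_append_drop α.length β, hhead, htail]
      rfl
    · rintro rfl
      refine ⟨by simp [Nat.mul_comm], ?_⟩
      rw [relRange_flatten_replicate hα]
      exact hS

theorem labelsOfLen_length_subset_singleton_of_not_ssubset {S : Set V} {α : List Λ}
    (hα : (relRange Edge S α).Nonempty)
    (hprefix : ¬ {β : List Λ | ∃ k : ℕ, 1 ≤ k ∧ k ≤ α.length ∧ β = α.take k} ⊂
      {β : List Λ | 1 ≤ β.length ∧ β.length ≤ α.length ∧ (relRange Edge S β).Nonempty}) :
    labelsOfLen Edge S α.length ⊆ {α} := by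
  have hsub : {β : List Λ | ∃ k : ℕ, 1 ≤ k ∧ k ≤ α.length ∧ β = α.take k} ⊆
      {β : List Λ | 1 ≤ β.length ∧ β.length ≤ α.length ∧ (relRange Edge S β).Nonempty} := by
    rintro β ⟨k, hk1, hk2, rfl⟩
    exact ⟨by simp; omega, by simp, hα.relRange_take k⟩
  rintro β ⟨hβlen, hβ⟩
  rcases Nat.eq_zero_or_pos α.length with h0 | hpos
  · rw [List.length_eq_zero_iff.mp h0, List.length_eq_zero_iff.mp (hβlen.trans h0)]
    rfl
  obtain ⟨k, -, -, rfl⟩ := (eq_of_le_of_not_lt hsub hprefix).symm.subset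
    (show β ∈ _ from ⟨hβlen ▸ hpos, hβlen.le, hβ⟩)
  exact List.take_of_length_le (by simpa using hβlen)

end LabeledPaths

theorem disagreeable_implies_loops_have_exits_general (Edge : V → Λ → V → Prop) (ℰ : Set (Set V))
    (hdis : Disagreeable Edge ℰ) :
    ∀ A ∈ ℰ, A.Nonempty → ∀ α : List Λ, IsLoop Edge α A → LoopHasExit Edge α A := by
  intro A hA hAne α hloop
  by_contra hnoexit
  obtain ⟨hprefix, hrange⟩ := not_or.mp hnoexit
  have hreturn : relRange Edge A α = A := (eq_of_le_of_not_lt hloop.2 hrange).symm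
  have huniq : labelsOfLen Edge A α.length ⊆ {α} :=
    labelsOfLen_length_subset_singleton_of_not_ssubset (by rwa [hreturn]) hprefix
  obtain ⟨n, -, hn⟩ := hdis A hA hAne α hloop.1
  exact hn (labelsOfLen_mul_eq_singleton hreturn hAne huniq n)

/-- a disagreeable labeled space has the property that every loop has an
exit. -/
theorem disagreeable_implies_loops_have_exits (Edge : V → Λ → V → Prop) (ℰ : Set (Set V))
    (hsm : SmallestAccom Edge ℰ) (hwlr : WLR Edge ℰ)
    (hdis : Disagreeable Edge ℰ) :
    ∀ A ∈ ℰ, A.Nonempty → ∀ α : List Λ, IsLoop Edge α A → LoopHasExit Edge α A :=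
  disagreeable_implies_loops_have_exits_general Edge ℰ hdis
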